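/- Let Σ be a symmetric positive definite p×p matrix and N ∈ ℕ. For each λ > 0, there exists a unique κ > 0 satisfying the self-consistent equation (1/N)Tr[Σ(Σ+κI)^{-1}] + λ/κ = 1. -/

import Mathlib

/-!
Diagonalising `Σ` turns `Tr[Σ(Σ+κI)⁻¹]` into `∑ μᵢ/(μᵢ+κ)` over its eigenvalues `μᵢ ≥ 0`, so the
left-hand side is continuous in `κ > 0` and strictly decreasing (because of `λ/κ`). It is `≥ 1` at
`κ = λ` and `< 1` at `κ = (1/N)∑ μᵢ + λ + 1`, so the intermediate value theorem gives a root, which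
is unique by strict monotonicity.
-/

open Set

theorem StrictAntiOn.existsUnique_eq_of_mem_Icc {α δ : Type*} [ConditionallyCompleteLinearOrder α]
    [TopologicalSpace α] [OrderTopology α] [DenselyOrdered α] [LinearOrder δ]
    [TopologicalSpace δ] [OrderClosedTopology δ] {s : Set α} {f : α → δ} {a b : α} {y : δ}
    (hs : s.OrdConnected) (hf : StrictAntiOn f s) (hc : ContinuousOn f s)
    (ha : a ∈ s) (hb : b ∈ s) (hab : a ≤ b) (hy : y ∈ Icc (f b) (f a)) :
    ∃! x, x ∈ s ∧ f x = y := by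
  obtain ⟨x, hx, rfl⟩ := intermediate_value_Icc' hab (hc.mono (hs.out ha hb)) hy
  exact ⟨x, ⟨hs.out ha hb hx, rfl⟩, fun x' ⟨hx', h⟩ => hf.injOn hx' (hs.out ha hb hx) h⟩

section SelfConsistent

variable {ι : Type*} [Fintype ι] {c lam : ℝ} {μ : ι → ℝ}

theorem strictAntiOn_selfConsistent (hc : 0 ≤ c) (hμ : ∀ i, 0 ≤ μ i) (hlam : 0 < lam) :
    StrictAntiOn (fun κ => c * ∑ i, μ i / (μ i + κ) + lam / κ) (Ioi 0) := by
  refine AntitoneOn.add_strictAnti (fun a ha b _ hab => ?_)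
    (fun a ha b _ hab => div_lt_div_of_pos_left hlam ha hab)
  gcongr with i
  · exact hμ i
  · exact add_pos_of_nonneg_of_pos (hμ i) ha

theorem continuousOn_selfConsistent (hμ : ∀ i, 0 ≤ μ i) :
    ContinuousOn (fun κ => c * ∑ i, μ i / (μ i + κ) + lam / κ) (Ioi 0) := by
  refine .add (continuousOn_const.mul (continuousOn_finsetSum _ fun i _ => ?_))
    (continuousOn_const.div continuousOn_id fun κ hκ => (mem_Ioi.mp hκ).ne')
  exact continuousOn_const.div (continuousOn_const.add continuousOn_id)
    fun κ hκ => (add_pos_of_nonneg_of_pos (hμ i) hκ).ne'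

theorem existsUnique_selfConsistent (hc : 0 ≤ c) (hμ : ∀ i, 0 ≤ μ i) (hlam : 0 < lam) :
    ∃! κ, 0 < κ ∧ c * ∑ i, μ i / (μ i + κ) + lam / κ = 1 := by
  set C := c * ∑ i, μ i + lam
  have hlamC : lam ≤ C := le_add_of_nonneg_left (mul_nonneg hc (Finset.sum_nonneg fun i _ => hμ i))
  have hC : 0 < C + 1 := by linarith
  refine (strictAntiOn_selfConsistent hc hμ hlam).existsUnique_eq_of_mem_Icc ordConnected_Ioi
    (continuousOn_selfConsistent hμ) hlam hC (by linarith) ⟨?_, ?_⟩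
  · calc c * ∑ i, μ i / (μ i + (C + 1)) + lam / (C + 1)
        ≤ c * ∑ i, μ i / (C + 1) + lam / (C + 1) := by
          gcongr c * ?_ + _
          exact Finset.sum_le_sum fun i _ =>
            div_le_div_of_nonneg_left (hμ i) hC (le_add_of_nonneg_left (hμ i))
      _ = C / (C + 1) := by rw [← Finset.sum_div, mul_div_assoc', ← add_div]
      _ ≤ 1 := (div_le_one hC).mpr (by linarith)
  · rw [div_self hlam.ne']
    exact le_add_of_nonneg_left (mul_nonneg hc (Finset.sum_nonneg fun i _ =>
      div_nonneg (hμ i) (add_pos_of_nonneg_of_pos (hμ i) hlam).le))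

end SelfConsistent

section Resolvent

variable {n 𝕜 : Type*} [Fintype n] [DecidableEq n] [RCLike 𝕜] {A : Matrix n n 𝕜}

theorem Matrix.IsHermitian.trace_cfc (hA : A.IsHermitian) (f : ℝ → ℝ) :
    (cfc f A).trace = ∑ i, (f (hA.eigenvalues i) : 𝕜) := by
  rw [hA.cfc_eq, IsHermitian.cfc, Unitary.conjStarAlgAut_apply, trace_mul_cycle,
    Unitary.coe_star_mul_self, Matrix.one_mul, trace_diagonal]
  rfl

theorem Matrix.IsHermitian.mul_inv_add_smul_one (hA : A.IsHermitian) {κ : ℝ}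
    (hκ : -κ ∉ spectrum ℝ A) :
    A * (A + κ • 1)⁻¹ = cfc (fun x => x / (x + κ)) A := by
  have hA' : IsSelfAdjoint A := hA
  have hcont (f : ℝ → ℝ) : ContinuousOn f (spectrum ℝ A) := A.finite_real_spectrum.continuousOn f
  have hshift : A + κ • 1 = cfc (fun x => x + κ) A := by
    rw [cfc_add_const κ _ A, cfc_id' ℝ A, Algebra.algebraMap_eq_smul_one]
  have hinv : (A + κ • 1)⁻¹ = cfc (fun x => (x + κ)⁻¹) A := by
    refine inv_eq_right_inv ?_
    have hne : ∀ x ∈ spectrum ℝ A, x + κ ≠ 0 := fun x hx h =>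
      hκ (eq_neg_of_add_eq_zero_left h ▸ hx)
    rw [hshift, ← cfc_mul _ _ A (hcont _) (hcont _),
      cfc_congr (g := 1) fun x hx => mul_inv_cancel₀ (hne x hx), cfc_one ℝ A]
  conv_lhs => rw [hinv]; arg 1; rw [← cfc_id' ℝ A]
  rw [← cfc_mul _ _ A (hcont _) (hcont _)]
  rfl

theorem Matrix.IsHermitian.trace_mul_inv_add_smul_one (hA : A.IsHermitian) {κ : ℝ}
    (hκ : -κ ∉ spectrum ℝ A) :
    (A * (A + κ • 1)⁻¹).trace = ∑ i, ((hA.eigenvalues i / (hA.eigenvalues i + κ) : ℝ) : 𝕜) := by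
  rw [hA.mul_inv_add_smul_one hκ, hA.trace_cfc]

open scoped ComplexOrder in
theorem Matrix.PosSemidef.neg_notMem_spectrum (hA : A.PosSemidef) {κ : ℝ} (hκ : 0 < κ) :
    -κ ∉ spectrum ℝ A := by
  rw [hA.1.spectrum_real_eq_range_eigenvalues]
  rintro ⟨i, hi⟩
  linarith [hA.eigenvalues_nonneg i]

end Resolvent

theorem effective_reg_exists_unique_general (p N : ℕ)
    (S : Matrix (Fin p) (Fin p) ℝ) (hS : S.PosDef)
    (lam : ℝ) (hlam : 0 < lam) :
    ∃! κ : ℝ, 0 < κ ∧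
      (N : ℝ)⁻¹ * (S * (S + κ • (1 : Matrix (Fin p) (Fin p) ℝ))⁻¹).trace
        + lam / κ = 1 := by
  refine (existsUnique_congr fun κ => and_congr_right fun hκ => ?_).mp
    (existsUnique_selfConsistent (inv_nonneg.mpr N.cast_nonneg)
      hS.posSemidef.eigenvalues_nonneg hlam)
  rw [hS.1.trace_mul_inv_add_smul_one (hS.posSemidef.neg_notMem_spectrum hκ)]
  rfl

/-- Existence and uniqueness of the effective regularization: for each `λ > 0`
there is a unique `κ > 0` with `(1/N) Tr[Σ(Σ+κI)⁻¹] + λ/κ = 1`. -/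
theorem effective_reg_exists_unique (p N : ℕ) (hN : 0 < N)
    (S : Matrix (Fin p) (Fin p) ℝ) (hS : S.PosDef)
    (lam : ℝ) (hlam : 0 < lam) :
    ∃! κ : ℝ, 0 < κ ∧
      (N : ℝ)⁻¹ * (S * (S + κ • (1 : Matrix (Fin p) (Fin p) ℝ))⁻¹).trace
        + lam / κ = 1 :=
  effective_reg_exists_unique_general p N S hS lam hlam
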